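/- Let E ⊆ ℂ be a nonempty closed set satisfying condition (U)_{2,β} for some β > 0. Then there exist positive constants A, r₀ and η, with exp(−η·log(2/t)/log log(4/t)) increasing in t on (0, 2r₀), such that for every increasing function g : (0,∞) → (0,∞) satisfying g(t) = exp(−η·log(2/t)/log log(4/t)) for all t ∈ (0, 2r₀), and for every a ∈ E and every r ∈ (0, r₀), one has Λ_g(E ∩ B̄(a,r)) ≥ A·g(2r), where B̄(a,r) is the closed disc of center a and radius r. -/

import Mathlib

/-!
Condition `(U)_{2,β}` grows inside `E ∩ B̄(a, r)` a binary tree whose level-`n` vertices are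
`2 R n`-separated, where `R 0 = r` and `R (n + 1) = (C / 8) R n log (2 / R n) ^ (-β)`.
Give each of the `2 ^ n` level-`n` branches mass `2 ^ (-n)`: a disc of radius in
`[R (n + 1), R n)` meets at most one of them. Along the radii, `log (1 / R n) / log log (2 / R n)`
grows by at most `β + 1` per step, so for `η = log 2 / (β + 1)` the gauge satisfies
`g (2 R n) ≥ 2 ^ (-n) g (2 r)`. Summing over a cover, made finite by compactness, gives
`Λ_g ≥ g (2 r) / 4`.
-/

open Metric Set
open scoped ENNReal

/-- A set `E ⊆ ℂ` satisfies condition `(U)_{2,β}`. -/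
def CondU2 (E : Set ℂ) (β : ℝ) : Prop :=
  ∃ C > (0 : ℝ), ∃ r₀ > (0 : ℝ), ∀ a ∈ E, ∀ r ∈ Set.Ioo (0 : ℝ) r₀,
    ({z : ℂ | C * r * (Real.log (1 / r)) ^ (-β) ≤ dist z a ∧ dist z a ≤ r} ∩ E).Nonempty

/-- The `g`-Hausdorff content of `F ⊆ ℂ`:
`Λ_g(F) = inf { ∑ₖ g(diam Bₖ) : (Bₖ) a countable cover of F by closed discs }`. -/
noncomputable def hContent (g : ℝ → ℝ) (F : Set ℂ) : ℝ≥0∞ :=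
  ⨅ (B : ℕ → ℂ × ℝ) (_ : ∀ k, 0 ≤ (B k).2)
    (_ : F ⊆ ⋃ k, closedBall (B k).1 (B k).2),
    ∑' k, ENNReal.ofReal (g (diam (closedBall (B k).1 (B k).2)))

open Real Filter Topology

section Gauge

noncomputable def logGauge (η t : ℝ) : ℝ := exp (-η * (log (2 / t) / log (log (4 / t))))

noncomputable def gaugeIndex (x : ℝ) : ℝ := (x - log 2) / log x

lemma one_le_log_of_exp_one_le {x : ℝ} (hx : exp 1 ≤ x) : 1 ≤ log x :=
  (le_log_iff_exp_le ((exp_pos 1).trans_le hx)).2 hx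

lemma gaugeIndex_monotoneOn : MonotoneOn gaugeIndex (Ici (exp 1)) := by
  intro x (hx : exp 1 ≤ x) y _ hxy
  have hx0 : 0 < x := (exp_pos 1).trans_le hx
  have hlx := one_le_log_of_exp_one_le hx
  have hly := one_le_log_of_exp_one_le (hx.trans hxy)
  have hlog2 : log 2 < x := by
    linarith [log_two_lt_d9, log_le_sub_one_of_pos hx0]
  -- concavity of `log`
  have hconc : x * log y ≤ x * log x + (y - x) := by
    have h := log_le_sub_one_of_pos (div_pos (hx0.trans_le hxy) hx0)
    rw [log_div (hx0.trans_le hxy).ne' hx0.ne', sub_le_iff_le_add, div_sub_one hx0.ne',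
      div_add' _ _ _ hx0.ne', le_div_iff₀ hx0] at h
    linarith
  unfold gaugeIndex
  rw [div_le_div_iff₀ (by linarith) (by linarith)]
  refine le_of_mul_le_mul_left ?_ hx0
  nlinarith [mul_le_mul_of_nonneg_left hconc (sub_nonneg.2 hlog2.le),
    mul_nonneg (sub_nonneg.2 hxy)
      (add_nonneg (mul_nonneg hx0.le (sub_nonneg.2 hlx)) (log_nonneg one_le_two))]

lemma gaugeIndex_add_le {x d : ℝ} (hx : exp 1 ≤ x) (hd : 0 ≤ d) :
    gaugeIndex (x + d) ≤ gaugeIndex x + d / log x := by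
  have hx0 : 0 < x := (exp_pos 1).trans_le hx
  have hlx := one_le_log_of_exp_one_le hx
  have hlog2 : log 2 < x := by
    linarith [log_two_lt_d9, log_le_sub_one_of_pos hx0]
  calc gaugeIndex (x + d) ≤ (x + d - log 2) / log x :=
        div_le_div_of_nonneg_left (by linarith) (by linarith) (log_le_log hx0 (by linarith))
    _ = gaugeIndex x + d / log x := by unfold gaugeIndex; ring

lemma logGauge_eq {t : ℝ} (ht : 0 < t) (η : ℝ) :
    logGauge η t = exp (-η * gaugeIndex (log (4 / t))) := by
  rw [logGauge, gaugeIndex, show 4 / t = 2 * (2 / t) by ring,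
    log_mul two_ne_zero (by positivity), add_sub_cancel_left]

lemma logGauge_two_mul {ρ : ℝ} (hρ : 0 < ρ) (η : ℝ) :
    logGauge η (2 * ρ) = exp (-η * gaugeIndex (log (2 / ρ))) := by
  rw [logGauge_eq (by positivity), show 4 / (2 * ρ) = 2 / ρ by field_simp; norm_num]

lemma logGauge_monotoneOn {η T : ℝ} (hη : 0 ≤ η) (hT : exp 1 ≤ log (4 / T)) :
    MonotoneOn (logGauge η) (Ioo 0 T) := by
  intro s hs t ht hst
  have hlog : ∀ u ∈ Ioo 0 T, exp 1 ≤ log (4 / u) := fun u hu =>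
    hT.trans (log_le_log (div_pos four_pos (hu.1.trans hu.2))
      (div_le_div_of_nonneg_left zero_le_four hu.1 hu.2.le))
  rw [logGauge_eq hs.1, logGauge_eq ht.1, exp_le_exp]
  refine mul_le_mul_of_nonpos_left (gaugeIndex_monotoneOn (hlog t ht) (hlog s hs) ?_)
    (neg_nonpos.2 hη)
  exact log_le_log (div_pos four_pos ht.1) (div_le_div_of_nonneg_left zero_le_four hs.1 hst)

end Gauge

section Radii

variable {C β r ρ : ℝ}

/-- `exp 1 ≤ x` keeps `gaugeIndex` monotone, `C ≤ x ^ β` makes the radii shrink by a factor `8`,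
and `8 / C ≤ x` bounds the growth of `gaugeIndex` along them. -/
def IsSmallScale (C β r : ℝ) : Prop := ∀ x ≥ log (2 / r), exp 1 ≤ x ∧ 8 / C ≤ x ∧ C ≤ x ^ β

lemma IsSmallScale.mono (hs : IsSmallScale C β r) (hρ : 0 < ρ) (hρr : ρ ≤ r) :
    IsSmallScale C β ρ := fun x hx =>
  hs x ((log_le_log (div_pos two_pos (hρ.trans_le hρr))
    (div_le_div_of_nonneg_left zero_le_two hρ hρr)).trans hx)

lemma IsSmallScale.log_pos (hs : IsSmallScale C β ρ) : 0 < log (2 / ρ) :=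
  (exp_pos 1).trans_le (hs _ le_rfl).1

/-- `4 R (n + 1)` is the inner radius of the `(U)_{2,β}` annulus of outer radius `R n / 2`. -/
noncomputable def radii (C β r : ℝ) : ℕ → ℝ
  | 0 => r
  | n + 1 => C / 8 * radii C β r n * log (2 / radii C β r n) ^ (-β)

lemma radii_succ (n : ℕ) :
    radii C β r (n + 1) = C / 8 * radii C β r n * log (2 / radii C β r n) ^ (-β) := rfl

lemma radii_step_pos_le (hC : 0 < C) (hρ : 0 < ρ) (hs : IsSmallScale C β ρ) :
    0 < C / 8 * ρ * log (2 / ρ) ^ (-β) ∧ C / 8 * ρ * log (2 / ρ) ^ (-β) ≤ ρ / 8 := by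
  have hpow : 0 < log (2 / ρ) ^ β := rpow_pos_of_pos hs.log_pos β
  rw [rpow_neg hs.log_pos.le]
  refine ⟨by positivity, ?_⟩
  calc C / 8 * ρ * (log (2 / ρ) ^ β)⁻¹ = ρ / 8 * (C / log (2 / ρ) ^ β) := by ring
    _ ≤ ρ / 8 * 1 := by gcongr; exact (div_le_one hpow).2 (hs _ le_rfl).2.2
    _ = ρ / 8 := mul_one _

lemma radii_pos_le (hC : 0 < C) (hr : 0 < r) (hs : IsSmallScale C β r) :
    ∀ n, 0 < radii C β r n ∧ radii C β r n ≤ r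
  | 0 => ⟨hr, le_rfl⟩
  | n + 1 => by
    obtain ⟨hpos, hle⟩ := radii_pos_le hC hr hs n
    obtain ⟨hpos', hle'⟩ := radii_step_pos_le hC hpos (hs.mono hpos hle)
    exact ⟨hpos', by rw [radii_succ]; linarith⟩

lemma IsSmallScale.radii (hC : 0 < C) (hr : 0 < r) (hs : IsSmallScale C β r) (n : ℕ) :
    IsSmallScale C β (radii C β r n) :=
  hs.mono (radii_pos_le hC hr hs n).1 (radii_pos_le hC hr hs n).2

lemma radii_succ_le (hC : 0 < C) (hr : 0 < r) (hs : IsSmallScale C β r) (n : ℕ) :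
    radii C β r (n + 1) ≤ radii C β r n / 8 :=
  (radii_step_pos_le hC (radii_pos_le hC hr hs n).1 (hs.radii hC hr n)).2

lemma tendsto_radii (hC : 0 < C) (hr : 0 < r) (hs : IsSmallScale C β r) :
    Tendsto (radii C β r) atTop (𝓝 0) := by
  have hgeom : ∀ n, radii C β r n ≤ r * 8⁻¹ ^ n := by
    intro n
    induction n with
    | zero => simp [radii]
    | succ n ih => rw [pow_succ]; linarith [radii_succ_le hC hr hs n]
  refine squeeze_zero (fun n => (radii_pos_le hC hr hs n).1.le) hgeom ?_
  simpa using (tendsto_pow_atTop_nhds_zero_of_lt_one (by norm_num : (0 : ℝ) ≤ 8⁻¹)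
    (by norm_num)).const_mul r

lemma log_two_div_radii_succ (hC : 0 < C) (hr : 0 < r) (hs : IsSmallScale C β r) (n : ℕ) :
    log (2 / radii C β r (n + 1)) = log (2 / radii C β r n) +
      (β * log (log (2 / radii C β r n)) + log (8 / C)) := by
  have hρ := (radii_pos_le hC hr hs n).1
  have hL := (hs.radii hC hr n).log_pos
  have h : 2 / radii C β r (n + 1) =
      2 / radii C β r n * (8 / C * log (2 / radii C β r n) ^ β) := by
    rw [radii_succ, rpow_neg hL.le]
    field_simp
  rw [h, log_mul (by positivity) (by positivity), log_mul (by positivity) (by positivity),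
    log_rpow hL]
  ring

lemma gaugeIndex_log_two_div_radii_le (hC : 0 < C) (hr : 0 < r) (hs : IsSmallScale C β r)
    (n : ℕ) :
    gaugeIndex (log (2 / radii C β r n)) ≤ gaugeIndex (log (2 / r)) + n * (β + 1) := by
  induction n with
  | zero => simp [radii]
  | succ n ih =>
    set L := log (2 / radii C β r n)
    obtain ⟨hLe, hL8, hLC⟩ := hs.radii hC hr n L le_rfl
    have hlogL := one_le_log_of_exp_one_le hLe
    have hlogC : log C ≤ β * log L := by
      rw [← log_rpow ((exp_pos 1).trans_le hLe)]
      exact log_le_log hC hLC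
    have hlog8 : log (8 / C) ≤ log L := log_le_log (by positivity) hL8
    have hinc : 0 ≤ β * log L + log (8 / C) := by
      rw [log_div (by norm_num) hC.ne']
      linarith [log_pos (by norm_num : (1 : ℝ) < 8)]
    have hstep : (β * log L + log (8 / C)) / log L ≤ β + 1 := by
      rw [div_le_iff₀ (by linarith)]
      linarith
    rw [log_two_div_radii_succ hC hr hs n]
    push_cast
    linarith [gaugeIndex_add_le hLe hinc]

lemma inv_two_pow_mul_logGauge_le (hC : 0 < C) (hr : 0 < r) (hs : IsSmallScale C β r) {η : ℝ}
    (hη : 0 ≤ η) (hηβ : η * (β + 1) ≤ log 2) (n : ℕ) :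
    2⁻¹ ^ n * logGauge η (2 * r) ≤ logGauge η (2 * radii C β r n) := by
  have hpow : (2⁻¹ : ℝ) ^ n = exp (-(n * log 2)) := by
    rw [exp_neg, exp_nat_mul, exp_log two_pos, inv_pow]
  rw [logGauge_two_mul hr, logGauge_two_mul (radii_pos_le hC hr hs n).1, hpow, ← exp_add,
    exp_le_exp]
  nlinarith [mul_le_mul_of_nonneg_left (gaugeIndex_log_two_div_radii_le hC hr hs n) hη,
    mul_le_mul_of_nonneg_left hηβ (Nat.cast_nonneg n : (0 : ℝ) ≤ n)]

end Radii

section CantorScheme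

variable {X : Type*}

def cantorPt (f : X → ℕ → X) (a : X) (σ : ℕ → Bool) : ℕ → X
  | 0 => a
  | n + 1 => if σ n then f (cantorPt f a σ n) n else cantorPt f a σ n

variable {E : Set X} {R : ℕ → ℝ} {f : X → ℕ → X} {a : X} {σ σ' : ℕ → Bool}

lemma cantorPt_congr {n : ℕ} (h : ∀ i < n, σ i = σ' i) : cantorPt f a σ n = cantorPt f a σ' n := by
  induction n with
  | zero => rfl
  | succ n ih => simp only [cantorPt, ih fun i hi => h i (by omega), h n n.lt_succ_self]

lemma cantorPt_mem (hfE : ∀ x ∈ E, ∀ n, f x n ∈ E) (ha : a ∈ E) (σ : ℕ → Bool) :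
    ∀ n, cantorPt f a σ n ∈ E
  | 0 => ha
  | n + 1 => by
    by_cases h : σ n <;> simp only [cantorPt, h, if_true, Bool.false_eq_true, if_false]
    · exact hfE _ (cantorPt_mem hfE ha σ n) n
    · exact cantorPt_mem hfE ha σ n

variable [PseudoMetricSpace X]

lemma dist_cantorPt_succ_le (hfE : ∀ x ∈ E, ∀ n, f x n ∈ E)
    (hnear : ∀ x ∈ E, ∀ n, dist (f x n) x ≤ R n / 2) (hR : ∀ n, 0 ≤ R n)
    (ha : a ∈ E) (σ : ℕ → Bool) (n : ℕ) :
    dist (cantorPt f a σ (n + 1)) (cantorPt f a σ n) ≤ R n / 2 := by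
  by_cases h : σ n <;> simp only [cantorPt, h, if_true, Bool.false_eq_true, if_false]
  · exact hnear _ (cantorPt_mem hfE ha σ n) n
  · simpa using div_nonneg (hR n) zero_le_two

lemma dist_cantorPt_le (hfE : ∀ x ∈ E, ∀ n, f x n ∈ E)
    (hnear : ∀ x ∈ E, ∀ n, dist (f x n) x ≤ R n / 2) (hR : ∀ n, 0 ≤ R n)
    (hRs : ∀ n, R (n + 1) ≤ R n / 2) (ha : a ∈ E) (σ : ℕ → Bool) {m n : ℕ} (hmn : m ≤ n) :
    dist (cantorPt f a σ n) (cantorPt f a σ m) ≤ R m - R n := by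
  induction n, hmn using Nat.le_induction with
  | base => simp
  | succ n _ ih =>
    linarith [dist_triangle (cantorPt f a σ (n + 1)) (cantorPt f a σ n) (cantorPt f a σ m),
      dist_cantorPt_succ_le hfE hnear hR ha σ n, hRs n]

lemma le_dist_cantorPt_succ (hfE : ∀ x ∈ E, ∀ n, f x n ∈ E)
    (hfar : ∀ x ∈ E, ∀ n, 4 * R (n + 1) ≤ dist (f x n) x) (ha : a ∈ E) {j : ℕ}
    (hagree : ∀ i < j, σ i = σ' i) (hj : σ j ≠ σ' j) :
    4 * R (j + 1) ≤ dist (cantorPt f a σ (j + 1)) (cantorPt f a σ' (j + 1)) := by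
  have hfx := hfar _ (cantorPt_mem hfE ha σ j) j
  simp only [cantorPt, ← cantorPt_congr (f := f) (a := a) hagree]
  cases hb : σ j <;> cases hb' : σ' j <;> simp_all [dist_comm]

lemma le_dist_cantorPt (hfE : ∀ x ∈ E, ∀ n, f x n ∈ E)
    (hfar : ∀ x ∈ E, ∀ n, 4 * R (n + 1) ≤ dist (f x n) x)
    (hnear : ∀ x ∈ E, ∀ n, dist (f x n) x ≤ R n / 2) 
    (hR : ∀ n, 0 ≤ R n) (hRs : ∀ n, R (n + 1) ≤ R n / 2) (ha : a ∈ E)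
    {i q N : ℕ} (hiq : i < q) (hqN : q ≤ N) (hσ : σ i ≠ σ' i) :
    2 * R q ≤ dist (cantorPt f a σ N) (cantorPt f a σ' N) := by
  classical
  have hex : ∃ j, σ j ≠ σ' j := ⟨i, hσ⟩
  set j := Nat.find hex
  have hji : j ≤ i := Nat.find_min' hex hσ
  have hagree : ∀ k < j, σ k = σ' k := fun k hk => not_not.1 (Nat.find_min hex hk)
  have hanti : Antitone R := antitone_nat_of_succ_le fun n => by linarith [hRs n, hR n]
  have hsplit := le_dist_cantorPt_succ hfE hfar ha hagree (Nat.find_spec hex)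
  have h₁ := dist_cantorPt_le hfE hnear hR hRs ha σ (show j + 1 ≤ N by omega)
  have h₂ := dist_cantorPt_le hfE hnear hR hRs ha σ' (show j + 1 ≤ N by omega)
  have := dist_triangle4 (cantorPt f a σ (j + 1)) (cantorPt f a σ N) (cantorPt f a σ' N)
    (cantorPt f a σ' (j + 1))
  linarith [dist_comm (cantorPt f a σ N) (cantorPt f a σ (j + 1)),
    hanti (show j + 1 ≤ q by omega), hR N]

end CantorScheme

section MassDistribution

open Finset in
/-- Kraft's inequality: if words of length `N` that share a label `k` share their first `q k`
letters, the labels carry total weight `∑ 2^{-q k} ≥ 1`. -/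
lemma one_le_sum_inv_two_pow {ι : Type*} {T : Finset ι} {q : ι → ℕ} {N : ℕ}
    (hqN : ∀ k ∈ T, q k ≤ N) (c : (Fin N → Bool) → ι) (hcT : ∀ τ, c τ ∈ T)
    (hc : ∀ τ τ', c τ = c τ' → ∀ i : Fin N, (i : ℕ) < q (c τ) → τ i = τ' i) :
    1 ≤ ∑ k ∈ T, (2⁻¹ : ℝ≥0∞) ^ q k := by
  classical
  have hfiber : ∀ k ∈ T, #{τ | c τ = k} ≤ 2 ^ (N - q k) := by
    intro k hk
    have hinj : Set.InjOn (fun (τ : Fin N → Bool) (j : Fin (N - q k)) => τ ⟨q k + j, by omega⟩)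
        (({τ | c τ = k} : Finset (Fin N → Bool)) : Set (Fin N → Bool)) := by
      intro τ hτ τ' hτ' h
      simp only [coe_filter, Finset.mem_univ, true_and, Set.mem_ofPred_eq] at hτ hτ'
      funext i
      by_cases hi : (i : ℕ) < q k
      · exact hc τ τ' (hτ.trans hτ'.symm) i (hτ ▸ hi)
      · simpa [Nat.add_sub_cancel' (not_lt.1 hi)] using
          congrFun h ⟨i - q k, by omega⟩
    simpa using card_le_card_of_injOn _ (fun _ _ => mem_univ _) hinj
  have hcount : 2 ^ N ≤ ∑ k ∈ T, 2 ^ (N - q k) :=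
    calc 2 ^ N = #(univ : Finset (Fin N → Bool)) := by simp
      _ = ∑ k ∈ T, #{τ | c τ = k} := card_eq_sum_card_fiberwise fun τ _ => hcT τ
      _ ≤ _ := sum_le_sum hfiber
  have hsplit : ∀ k ∈ T, (2 : ℝ≥0∞) ^ (N - q k) = 2 ^ N * 2⁻¹ ^ q k := by
    intro k hk
    rw [← Nat.sub_add_cancel (hqN k hk), pow_add, Nat.add_sub_cancel, mul_assoc, ← mul_pow,
      ENNReal.mul_inv_cancel two_ne_zero ENNReal.ofNat_ne_top, one_pow, mul_one]
  refine (ENNReal.mul_le_mul_iff_right (pow_ne_zero N two_ne_zero)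
    (ENNReal.pow_ne_top (n := N) ENNReal.ofNat_ne_top)).1 ?_
  rw [mul_one, mul_sum, ← sum_congr rfl hsplit]
  exact_mod_cast hcount

/-- A ball of radius `≤ R q` meets at most one branch of level `q` of the tree, so it carries at
most the mass `2^{-q}` of the uniform distribution on the leaves. -/
lemma one_le_tsum_of_subset_iUnion_ball {X : Type*} [PseudoMetricSpace X] {K : Set X}
    (hK : IsCompact K) {R : ℕ → ℝ} {G : (ℕ → Bool) → ℕ → X} (hGK : ∀ σ N, G σ N ∈ K)
    (hsep : ∀ σ σ' i q N, i < q → q ≤ N → σ i ≠ σ' i → 2 * R q ≤ dist (G σ N) (G σ' N))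
    {c : ℕ → X} {w : ℕ → ℝ} {q : ℕ → ℕ} (hw : ∀ k, w k ≤ R (q k))
    (hcover : K ⊆ ⋃ k, ball (c k) (w k)) :
    1 ≤ ∑' k, (2⁻¹ : ℝ≥0∞) ^ q k := by
  obtain ⟨T, hT⟩ := hK.elim_finite_subcover _ (fun _ => isOpen_ball) hcover
  obtain ⟨N, hqN⟩ : ∃ N, ∀ k ∈ T, q k ≤ N := ⟨T.sup q, fun k hk => Finset.le_sup hk⟩
  let leaf (τ : Fin N → Bool) (i : ℕ) : Bool := if h : i < N then τ ⟨i, h⟩ else false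
  have hleaf : ∀ τ, ∃ k ∈ T, G (leaf τ) N ∈ ball (c k) (w k) := fun τ => by
    simpa using hT (hGK (leaf τ) N)
  choose label hlabelT hlabel using hleaf
  refine (one_le_sum_inv_two_pow hqN label hlabelT ?_).trans
    (ENNReal.sum_le_tsum T)
  intro τ τ' hττ' i hi
  by_contra hne
  have hfar := hsep (leaf τ) (leaf τ') i _ N hi (hqN _ (hlabelT τ))
    (by simpa [leaf, i.isLt] using hne)
  have h₁ := mem_ball.1 (hlabel τ)
  have h₂ := mem_ball.1 (hlabel τ')
  rw [← hττ'] at h₂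
  linarith [dist_triangle_right (G (leaf τ) N) (G (leaf τ') N) (c (label τ)), hw (label τ)]

lemma le_hContent {g : ℝ → ℝ} {F : Set ℂ} {x : ℝ≥0∞}
    (h : ∀ B : ℕ → ℂ × ℝ, (∀ k, 0 ≤ (B k).2) → F ⊆ ⋃ k, closedBall (B k).1 (B k).2 →
      x ≤ ∑' k, ENNReal.ofReal (g (2 * (B k).2))) :
    x ≤ hContent g F := by
  refine le_iInf₂ fun B hB => le_iInf fun hF => ?_
  have hdiam : ∀ k, diam (closedBall (B k).1 (B k).2) = 2 * (B k).2 := fun k =>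
    diam_closedBall_eq _ (hB k)
  simpa only [hdiam] using h B hB hF

lemma exists_succ_le_lt_of_tendsto {R : ℕ → ℝ} (hR : Tendsto R atTop (𝓝 0)) {ρ : ℝ}
    (hρ : 0 < ρ) (hρR : ρ < R 0) : ∃ n, R (n + 1) ≤ ρ ∧ ρ < R n := by
  classical
  have hex : ∃ n, R n ≤ ρ := ((hR.eventually (ge_mem_nhds hρ)).exists)
  have hpos : Nat.find hex ≠ 0 := fun h => (Nat.find_spec hex).not_gt (h ▸ hρR)
  obtain ⟨n, hn⟩ := Nat.exists_eq_add_one_of_ne_zero hpos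
  exact ⟨n, by rw [← hn]; exact Nat.find_spec hex, not_le.1 (Nat.find_min hex (by omega))⟩

/-- Balls of radius zero are assigned the levels `k + 2`, of total weight `1 / 2`. -/
lemma inv_two_le_tsum_ite {s : ℕ → Prop} [DecidablePred s] {p : ℕ → ℕ}
    (h : 1 ≤ ∑' k, (2⁻¹ : ℝ≥0∞) ^ (if s k then p k else k + 2)) :
    2⁻¹ ≤ ∑' k, if s k then (2⁻¹ : ℝ≥0∞) ^ p k else 0 := by
  have hgeom : ∑' k : ℕ, (2⁻¹ : ℝ≥0∞) ^ (k + 2) = 2⁻¹ := by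
    simp only [pow_add, ENNReal.tsum_mul_right, ENNReal.tsum_geometric_two]
    rw [pow_two, ← mul_assoc, ENNReal.mul_inv_cancel two_ne_zero ENNReal.ofNat_ne_top, one_mul]
  have hle : ∀ k, (2⁻¹ : ℝ≥0∞) ^ (if s k then p k else k + 2)
      ≤ (if s k then 2⁻¹ ^ p k else 0) + 2⁻¹ ^ (k + 2) := fun k => by
    split_ifs <;> simp
  have := h.trans ((ENNReal.tsum_le_tsum hle).trans_eq (ENNReal.tsum_add ..))
  rw [hgeom, ← ENNReal.inv_two_add_inv_two] at this
  exact (ENNReal.add_le_add_iff_right (by simp)).1 this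

end MassDistribution

section Content

theorem ofReal_le_hContent_of_tree {K : Set ℂ} (hK : IsCompact K) {R : ℕ → ℝ}
    (hRpos : ∀ n, 0 < R n) (hRlim : Tendsto R atTop (𝓝 0)) {G : (ℕ → Bool) → ℕ → ℂ}
    (hGK : ∀ σ N, G σ N ∈ K)
    (hsep : ∀ σ σ' i q N, i < q → q ≤ N → σ i ≠ σ' i → 2 * R q ≤ dist (G σ N) (G σ' N))
    {g : ℝ → ℝ} (hg : MonotoneOn g (Ioi 0)) (hg0 : 0 ≤ g (2 * R 0))
    (hgR : ∀ n, 2⁻¹ ^ n * g (2 * R 0) ≤ g (2 * R n)) :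
    ENNReal.ofReal (4⁻¹ * g (2 * R 0)) ≤ hContent g K := by
  refine le_hContent fun B hB hcover => ?_
  by_cases hbig : ∃ k, R 0 ≤ (B k).2
  · obtain ⟨k, hk⟩ := hbig
    refine le_trans (ENNReal.ofReal_le_ofReal ?_) (ENNReal.le_tsum k)
    calc 4⁻¹ * g (2 * R 0) ≤ g (2 * R 0) := by linarith
      _ ≤ g (2 * (B k).2) :=
        hg (by simpa using hRpos 0) (by simp only [mem_Ioi]; linarith [hRpos 0]) (by linarith)
  push Not at hbig
  classical
  have hlevel : ∀ k, 0 < (B k).2 → ∃ n, R (n + 1) ≤ (B k).2 ∧ (B k).2 < R n := fun k hk =>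
    exists_succ_le_lt_of_tendsto hRlim hk (hbig k)
  choose! p hp using hlevel
  let q : ℕ → ℕ := fun k => if 0 < (B k).2 then p k else k + 2
  have hw : ∀ k, (B k).2 < ((B k).2 + R (q k)) / 2 ∧ ((B k).2 + R (q k)) / 2 ≤ R (q k) := by
    intro k
    by_cases hk : 0 < (B k).2
    · simp only [q, if_pos hk]; constructor <;> linarith [(hp k hk).2]
    · have : (B k).2 = 0 := le_antisymm (not_lt.1 hk) (hB k)
      simp only [q, if_neg hk, this]; constructor <;> linarith [hRpos (k + 2)]
  have hmass := inv_two_le_tsum_ite (one_le_tsum_of_subset_iUnion_ball hK hGK hsep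
    (fun k => (hw k).2) (hcover.trans (iUnion_mono fun k => closedBall_subset_ball (hw k).1)))
  have hhalf : 0 ≤ 2⁻¹ * g (2 * R 0) := mul_nonneg (by norm_num) hg0
  calc ENNReal.ofReal (4⁻¹ * g (2 * R 0)) = ENNReal.ofReal (2⁻¹ * g (2 * R 0)) * 2⁻¹ := by
        rw [show (4⁻¹ : ℝ) * g (2 * R 0) = 2⁻¹ * g (2 * R 0) * 2⁻¹ by ring,
          ENNReal.ofReal_mul hhalf, ENNReal.ofReal_inv_of_pos two_pos, ENNReal.ofReal_ofNat]
    _ ≤ ENNReal.ofReal (2⁻¹ * g (2 * R 0)) * ∑' k, if 0 < (B k).2 then 2⁻¹ ^ p k else 0 := by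
        gcongr
    _ = ∑' k, ENNReal.ofReal (2⁻¹ * g (2 * R 0)) * if 0 < (B k).2 then 2⁻¹ ^ p k else 0 :=
        ENNReal.tsum_mul_left.symm
    _ ≤ ∑' k, ENNReal.ofReal (g (2 * (B k).2)) := ENNReal.tsum_le_tsum fun k => ?_
  split_ifs with hk
  · have hpow : (2⁻¹ : ℝ≥0∞) ^ p k = ENNReal.ofReal (2⁻¹ ^ p k) := by
      rw [ENNReal.ofReal_pow (by norm_num), ENNReal.ofReal_inv_of_pos two_pos, ENNReal.ofReal_ofNat]
    rw [hpow, ← ENNReal.ofReal_mul hhalf]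
    refine ENNReal.ofReal_le_ofReal ?_
    calc 2⁻¹ * g (2 * R 0) * 2⁻¹ ^ p k = 2⁻¹ ^ (p k + 1) * g (2 * R 0) := by ring
      _ ≤ g (2 * R (p k + 1)) := hgR _
      _ ≤ g (2 * (B k).2) := hg (by simpa using hRpos (p k + 1)) (by simpa using hk)
          (by linarith [(hp k hk).1])
  · simp

theorem ofReal_le_hContent_inter_closedBall {E : Set ℂ} (hE : IsClosed E) {C β r₁ : ℝ}
    (hC : 0 < C) (hann : ∀ a ∈ E, ∀ r ∈ Ioo 0 r₁,
      ({z : ℂ | C * r * (log (1 / r)) ^ (-β) ≤ dist z a ∧ dist z a ≤ r} ∩ E).Nonempty)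
    {r : ℝ} (hr : 0 < r) (hr₁ : r < r₁) (hs : IsSmallScale C β r) {η : ℝ} (hη : 0 ≤ η)
    (hηβ : η * (β + 1) ≤ log 2) {g : ℝ → ℝ} (hgpos : ∀ t ∈ Ioi 0, 0 < g t)
    (hg : MonotoneOn g (Ioi 0)) (hgeq : ∀ t ∈ Ioc 0 (2 * r), g t = logGauge η t) {a : ℂ}
    (ha : a ∈ E) :
    ENNReal.ofReal (4⁻¹ * g (2 * r)) ≤ hContent g (E ∩ closedBall a r) := by
  set R := radii C β r
  have hRpos : ∀ n, 0 < R n := fun n => (radii_pos_le hC hr hs n).1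
  have hRle : ∀ n, R n ≤ r := fun n => (radii_pos_le hC hr hs n).2
  have hstep : ∀ x ∈ E, ∀ n, ∃ y ∈ E, 4 * R (n + 1) ≤ dist y x ∧ dist y x ≤ R n / 2 := by
    intro x hx n
    obtain ⟨y, ⟨hy₁, hy₂⟩, hyE⟩ :=
      hann x hx (R n / 2) ⟨by linarith [hRpos n], by linarith [hRle n]⟩
    refine ⟨y, hyE, le_of_eq_of_le ?_ hy₁, hy₂⟩
    rw [show R (n + 1) = C / 8 * R n * log (2 / R n) ^ (-β) from radii_succ n, one_div_div]
    ring
  choose! f hfE hfar hnear using hstep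
  have hR : ∀ n, 0 ≤ R n := fun n => (hRpos n).le
  have hRs : ∀ n, R (n + 1) ≤ R n / 2 := fun n => by
    linarith [radii_succ_le hC hr hs n, hRpos n]
  have hG : ∀ σ N, dist (cantorPt f a σ N) a ≤ r := fun σ N =>
    (dist_cantorPt_le hfE hnear hR hRs ha σ (Nat.zero_le N)).trans (sub_le_self _ (hR N))
  have hmem : ∀ n, 2 * R n ∈ Ioc 0 (2 * r) := fun n =>
    ⟨by linarith [hRpos n], by linarith [hRle n]⟩
  refine ofReal_le_hContent_of_tree ((isCompact_closedBall a r).inter_left hE) hRpos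
    (tendsto_radii hC hr hs) (fun σ N => ⟨cantorPt_mem hfE ha σ N, hG σ N⟩)
    (fun σ σ' i q N => le_dist_cantorPt hfE hfar hnear hR hRs ha) hg
    (hgpos _ (hmem 0).1).le fun n => ?_
  rw [hgeq _ (hmem 0), hgeq _ (hmem n)]
  exact inv_two_pow_mul_logGauge_le hC hr hs hη hηβ n

end Content

theorem stmt_15 (E : Set ℂ) (hcl : IsClosed E)
    (β : ℝ) (hβ : 0 < β) (hU : CondU2 E β) :
    ∃ A > (0 : ℝ), ∃ r₀ > (0 : ℝ), ∃ η > (0 : ℝ),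
      MonotoneOn
        (fun t : ℝ => Real.exp (-η * (Real.log (2 / t) / Real.log (Real.log (4 / t)))))
        (Set.Ioo (0 : ℝ) (2 * r₀)) ∧
      ∀ g : ℝ → ℝ, (∀ t ∈ Set.Ioi (0 : ℝ), 0 < g t) →
        MonotoneOn g (Set.Ioi (0 : ℝ)) →
        (∀ t ∈ Set.Ioo (0 : ℝ) (2 * r₀),
          g t = Real.exp (-η * (Real.log (2 / t) / Real.log (Real.log (4 / t))))) →
        ∀ a ∈ E, ∀ r ∈ Set.Ioo (0 : ℝ) r₀,
          ENNReal.ofReal (A * g (2 * r)) ≤ hContent g (E ∩ closedBall a r) := by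
  obtain ⟨C, hC, r₁, hr₁, hann⟩ := hU
  obtain ⟨Λ, hΛ⟩ := eventually_atTop.1 ((eventually_ge_atTop (exp 1)).and
    ((eventually_ge_atTop (8 / C)).and ((tendsto_rpow_atTop hβ).eventually_ge_atTop C)))
  set r₀ := min r₁ (2 * exp (-Λ))
  have hr₀ : 0 < r₀ := lt_min hr₁ (by positivity)
  have hΛr₀ : Λ ≤ log (2 / r₀) := by
    rw [le_log_iff_exp_le (by positivity), le_div_iff₀ hr₀]
    calc exp Λ * r₀ ≤ exp Λ * (2 * exp (-Λ)) := by gcongr; exact min_le_right _ _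
      _ = 2 := by rw [mul_left_comm, ← exp_add, add_neg_cancel, exp_zero, mul_one]
  have hs₀ : IsSmallScale C β r₀ := fun x hx => hΛ x (hΛr₀.trans hx)
  refine ⟨4⁻¹, by norm_num, r₀, hr₀, log 2 / (β + 1), by positivity,
    logGauge_monotoneOn (by positivity) ?_, ?_⟩
  · rw [show 4 / (2 * r₀) = 2 / r₀ by field_simp; norm_num]
    exact (hs₀ _ le_rfl).1
  · intro g hgpos hg hgeq a ha r hr
    exact ofReal_le_hContent_inter_closedBall hcl hC hann hr.1 (hr.2.trans_le (min_le_left _ _))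
      (hs₀.mono hr.1 hr.2.le) (by positivity) (div_mul_cancel₀ _ (by positivity)).le hgpos hg
      (fun t ht => hgeq t ⟨ht.1, by linarith [ht.2, hr.2]⟩) ha
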